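/- arXiv:2508.17257 — 14 statements merged into one kernel-verified Lean document; each statement's English description precedes it below -/
import Mathlib

section
/- Let (T,(X,𝒦)) be a transformation semigroup with X compact, and let r, s ∈ A ⊆ T. Then (T,(X,𝒦)) has the shadowing property with respect to A if and only if it has the shadowing property with respect to A ∪ {s r}, where s r is the product in T (acting by (s r)·x = s·(r·x)). -/
open scoped Uniformity

/-- `(x t)_{t ∈ T}` is a `θ`-pseudo orbit with respect to `A`. -/
def IsPseudoOrbit {T X : Type*} [Monoid T] [MulAction T X]
    (θ : Set (X × X)) (A : Set T) (x : T → X) : Prop :=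
  ∀ a ∈ A, ∀ t : T, (a • x t, x (a * t)) ∈ θ

/-- `p` is a `θ`-trace of `(x t)_{t ∈ T}`. -/
def IsTrace {T X : Type*} [Monoid T] [MulAction T X]
    (θ : Set (X × X)) (x : T → X) (p : X) : Prop :=
  ∀ t : T, (t • p, x t) ∈ θ

/-- The transformation semigroup has the shadowing property with respect to `A`. -/
def ShadowingWrt (T X : Type*) [Monoid T] [MulAction T X] [UniformSpace X]
    (A : Set T) : Prop :=
  ∀ α ∈ 𝓤 X, ∃ β ∈ 𝓤 X, ∀ x : T → X, IsPseudoOrbit β A x → ∃ p : X, IsTrace α x p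

theorem stmt2 {T X : Type*} [Monoid T] [MulAction T X] [UniformSpace X]
    [ContinuousConstSMul T X] [CompactSpace X]
    (A : Set T) (r s : T) (hr : r ∈ A) (hs : s ∈ A) :
    ShadowingWrt T X A ↔ ShadowingWrt T X (A ∪ {s * r}) := by
  constructor
  · intro h α hα
    obtain ⟨β, hβ, hsh⟩ := h α hα
    exact ⟨β, hβ, fun x hx => hsh x fun a ha t => hx a (Set.mem_union_left _ ha) t⟩
  · intro h α hα
    obtain ⟨β, hβ, hsh⟩ := h α hα
    obtain ⟨β₂, hβ₂, hcomp⟩ := comp_mem_uniformity_sets hβ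
    have hs' : UniformContinuous (fun y : X => s • y) :=
      CompactSpace.uniformContinuous_of_continuous (continuous_const_smul s)
    have hγ : (fun p : X × X => ((s • p.1 : X), s • p.2)) ⁻¹' β₂ ∈ 𝓤 X := hs' hβ₂
    refine ⟨_ ∩ (β₂ ∩ β), Filter.inter_mem hγ (Filter.inter_mem hβ₂ hβ), fun x hx => ?_⟩
    refine hsh x fun a ha t => ?_
    rcases ha with ha | ha
    · exact (hx a ha t).2.2
    · rcases ha with rfl
      have h1 : ((s • (r • x t) : X), s • x (r * t)) ∈ β₂ := (hx r hr t).1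
      have h2 : ((s • x (r * t) : X), x (s * (r * t))) ∈ β₂ := (hx s hs (r * t)).2.1
      have : ((s • (r • x t) : X), x (s * (r * t))) ∈ β := hcomp ⟨_, h1, h2⟩
      simpa [mul_smul, mul_assoc] using this
end

section
/- Let (T,(X,𝒦)) be a transformation group (T a group) with X compact, and let s ∈ A ⊆ T. Then (T,(X,𝒦)) has the shadowing property with respect to A if and only if it has the shadowing property with respect to A ∪ {s⁻¹}. -/
open scoped Uniformity

theorem stmt3 {T X : Type*} [Group T] [MulAction T X] [UniformSpace X]
    [ContinuousConstSMul T X] [CompactSpace X]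
    (A : Set T) (s : T) (hs : s ∈ A) :
    ShadowingWrt T X A ↔ ShadowingWrt T X (A ∪ {s⁻¹}) := by
  constructor
  · intro h α hα
    obtain ⟨β, hβ, H⟩ := h α hα
    exact ⟨β, hβ, fun x hx => H x fun a ha t => hx a (Set.mem_union_left _ ha) t⟩
  · intro h α hα
    obtain ⟨γ, hγ, H⟩ := h α hα
    have hgc : UniformContinuous (fun p : X => s⁻¹ • p) :=
      CompactSpace.uniformContinuous_of_continuous (continuous_const_smul _)
    have hpre : (Prod.map (fun p : X => s⁻¹ • p) fun p : X => s⁻¹ • p) ⁻¹' γ ∈ 𝓤 X :=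
      hgc hγ
    set δ := ((Prod.map (fun p : X => s⁻¹ • p) fun p : X => s⁻¹ • p) ⁻¹' γ) ∩ γ with hδdef
    have hδu : δ ∈ 𝓤 X := Filter.inter_mem hpre hγ
    refine ⟨SetRel.symmetrize δ, symmetrize_mem_uniformity hδu, fun x hx => ?_⟩
    apply H x
    intro a ha t
    rcases ha with ha | ha
    · exact (SetRel.symmetrize_subset_self (R := δ) (hx a ha t)).2
    · rw [Set.mem_singleton_iff] at ha
      subst ha
      have h1 : (x t, s • x (s⁻¹ * t)) ∈ δ := by
        have h0 := hx s hs (s⁻¹ * t)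
        rw [mul_inv_cancel_left] at h0
        exact h0.2
      have h2 := h1.1
      simp only [Set.mem_preimage, Prod.map_apply] at h2
      rwa [inv_smul_smul] at h2
end

section
/- Let (T,(X,𝒦)) be a transformation semigroup with X compact, let A be a nonempty subset of T, and suppose s belongs to the subsemigroup of T generated by A (i.e., s is a finite product of elements of A). Then (T,(X,𝒦)) has the shadowing property with respect to A if and only if it has the shadowing property with respect to A ∪ {s}. -/
open scoped Uniformity

theorem stmt4_key {T X : Type*} [Monoid T] [MulAction T X] [UniformSpace X]
    [ContinuousConstSMul T X] [CompactSpace X]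
    (A : Set T) (s : T) (hs : s ∈ Subsemigroup.closure A) :
    ∀ α ∈ 𝓤 X, ∃ β ∈ 𝓤 X, ∀ x : T → X, IsPseudoOrbit β A x →
      ∀ t : T, (s • x t, x (s * t)) ∈ α := by
  induction hs using Subsemigroup.closure_induction with
  | mem a ha =>
      intro α hα
      exact ⟨α, hα, fun x hx t => hx a ha t⟩
  | mul s₁ s₂ _ _ h1 h2 =>
      intro α hα
      obtain ⟨α', hα', hcomp⟩ := comp_mem_uniformity_sets hα
      obtain ⟨β₁, hβ₁, hb1⟩ := h1 α' hα'
      have hc : Continuous (fun y : X => s₁ • y) := continuous_const_smul s₁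
      have hu : UniformContinuous (fun y : X => s₁ • y) :=
        CompactSpace.uniformContinuous_of_continuous (α := X) (β := X) hc
      have hγ : {p : X × X | (s₁ • p.1, s₁ • p.2) ∈ α'} ∈ 𝓤 X := hu hα'
      obtain ⟨β₂, hβ₂, hb2⟩ := h2 _ hγ
      refine ⟨β₁ ∩ β₂, Filter.inter_mem hβ₁ hβ₂, fun x hx t => ?_⟩
      have hx1 : IsPseudoOrbit β₁ A x := fun a ha t => (hx a ha t).1
      have hx2 : IsPseudoOrbit β₂ A x := fun a ha t => (hx a ha t).2
      have e1 : (s₁ • s₂ • x t, s₁ • x (s₂ * t)) ∈ α' := hb2 x hx2 t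
      have e2 : (s₁ • x (s₂ * t), x (s₁ * (s₂ * t))) ∈ α' := hb1 x hx1 (s₂ * t)
      have : (s₁ • s₂ • x t, x (s₁ * (s₂ * t))) ∈ α := hcomp ⟨_, e1, e2⟩
      simpa [mul_smul, mul_assoc] using this

theorem stmt4 {T X : Type*} [Monoid T] [MulAction T X] [UniformSpace X]
    [ContinuousConstSMul T X] [CompactSpace X]
    (A : Set T) (hA : A.Nonempty) (s : T) (hs : s ∈ Subsemigroup.closure A) :
    ShadowingWrt T X A ↔ ShadowingWrt T X (A ∪ {s}) := by
  constructor
  · -- easy: any pseudo orbit wrt A ∪ {s} is a pseudo orbit wrt A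
    intro h α hα
    obtain ⟨β, hβ, hb⟩ := h α hα
    exact ⟨β, hβ, fun x hx => hb x (fun a ha t => hx a (Set.mem_union_left _ ha) t)⟩
  · intro h
    have key := stmt4_key (X := X) A s hs
    intro α hα
    obtain ⟨β, hβ, hb⟩ := h α hα
    obtain ⟨β', hβ', hb'⟩ := key β hβ
    refine ⟨β ∩ β', Filter.inter_mem hβ hβ', fun x hx => ?_⟩
    have hxA : IsPseudoOrbit β' A x := fun a ha t => (hx a ha t).2
    refine hb x (fun a ha t => ?_)
    rcases ha with ha | ha
    · exact (hx a ha t).1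
    · rcases ha with rfl
      exact hb' x hxA t
end

section
/- Let (T,(X,𝒦)) be a transformation group (T a group) with X compact, let A be a nonempty subset of T, and suppose s belongs to the subgroup of T generated by A. Then (T,(X,𝒦)) has the shadowing property with respect to A if and only if it has the shadowing property with respect to A ∪ {s}. -/
open scoped Uniformity

theorem stmt5 {T X : Type*} [Group T] [MulAction T X] [UniformSpace X]
    [ContinuousConstSMul T X] [CompactSpace X]
    (A : Set T) (hA : A.Nonempty) (s : T) (hs : s ∈ Subgroup.closure A) :
    ShadowingWrt T X A ↔ ShadowingWrt T X (A ∪ {s}) := by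
  constructor
  · intro h α hα
    obtain ⟨β, hβ, hsh⟩ := h α hα
    exact ⟨β, hβ, fun x hx => hsh x fun a ha t => hx a (Or.inl ha) t⟩
  · intro h
    have key : ∀ s' ∈ Subgroup.closure A, ∀ β ∈ 𝓤 X, ∃ β' ∈ 𝓤 X,
        ∀ x : T → X, IsPseudoOrbit β' A x → ∀ t, (s' • x t, x (s' * t)) ∈ β := by
      intro s' hs'
      induction hs' using Subgroup.closure_induction with
      | mem a ha =>
        intro β hβ
        exact ⟨β, hβ, fun x hx t => hx a ha t⟩
      | one =>
        intro β hβ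
        exact ⟨β, hβ, fun x hx t => by simpa using refl_mem_uniformity hβ⟩
      | mul s₁ s₂ _ _ ih1 ih2 =>
        intro β hβ
        obtain ⟨γ, hγ, hγβ⟩ := comp_mem_uniformity_sets hβ
        have hc : UniformContinuous (fun p : X => s₁ • p) :=
          CompactSpace.uniformContinuous_of_continuous (continuous_const_smul s₁)
        have hδ : {p : X × X | (s₁ • p.1, s₁ • p.2) ∈ γ} ∈ 𝓤 X := hc hγ
        obtain ⟨β₁, hβ₁, h1⟩ := ih1 γ hγ
        obtain ⟨β₂, hβ₂, h2⟩ := ih2 _ hδ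
        refine ⟨β₁ ∩ β₂, Filter.inter_mem hβ₁ hβ₂, fun x hx t => ?_⟩
        have hx1 : IsPseudoOrbit β₁ A x := fun a ha t => (hx a ha t).1
        have hx2 : IsPseudoOrbit β₂ A x := fun a ha t => (hx a ha t).2
        have e1 : (s₁ • s₂ • x t, s₁ • x (s₂ * t)) ∈ γ := h2 x hx2 t
        have e2 : (s₁ • x (s₂ * t), x (s₁ * (s₂ * t))) ∈ γ := h1 x hx1 (s₂ * t)
        have := hγβ (SetRel.prodMk_mem_comp e1 e2)
        simpa [mul_smul, mul_assoc] using this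
      | inv s' _ ih =>
        intro β hβ
        have hc : UniformContinuous (fun p : X => s'⁻¹ • p) :=
          CompactSpace.uniformContinuous_of_continuous (continuous_const_smul s'⁻¹)
        have hδ : {p : X × X | (s'⁻¹ • p.1, s'⁻¹ • p.2) ∈ β} ∈ 𝓤 X := hc hβ
        obtain ⟨δ', hδ', hsymm, hcomp⟩ := comp_symm_mem_uniformity_sets hδ
        obtain ⟨β', hβ', h1⟩ := ih δ' hδ'
        refine ⟨β', hβ', fun x hx t => ?_⟩
        have e1 : (s' • x (s'⁻¹ * t), x (s' * (s'⁻¹ * t))) ∈ δ' := h1 x hx (s'⁻¹ * t)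
        rw [mul_inv_cancel_left] at e1
        have e2 : (x t, s' • x (s'⁻¹ * t)) ∈ δ' := hsymm.symm _ _ e1
        have e2' := hcomp (SetRel.prodMk_mem_comp e2 (refl_mem_uniformity hδ'))
        have e3 : (s'⁻¹ • x t, s'⁻¹ • s' • x (s'⁻¹ * t)) ∈ β := e2'
        simpa [inv_smul_smul] using e3
    intro α hα
    obtain ⟨β, hβ, hsh⟩ := h α hα
    obtain ⟨β'', hβ'', hkey⟩ := key s hs β hβ
    refine ⟨β ∩ β'', Filter.inter_mem hβ hβ'', fun x hx => ?_⟩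
    apply hsh
    intro a ha t
    rcases ha with ha | ha
    · exact (hx a ha t).1
    · rcases ha with rfl
      exact hkey x (fun a ha t => (hx a ha t).2) t
end

section
/- Let (T,(X,𝒦)) be a transformation semigroup. If (T,(X,𝒦)) has the shadowing property with respect to {e}, then for all nonempty open subsets U, V of X and every t ∈ T with t ≠ e, the set (t·U) ∩ V is nonempty, where t·U = {t·x : x ∈ U}. -/
open scoped Uniformity

theorem stmt7 {T X : Type*} [Monoid T] [MulAction T X] [UniformSpace X]
    [ContinuousConstSMul T X]
    (h : ShadowingWrt T X ({1} : Set T)) :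
    ∀ U V : Set X, IsOpen U → U.Nonempty → IsOpen V → V.Nonempty →
      ∀ t : T, t ≠ 1 → ((fun x : X => t • x) '' U ∩ V).Nonempty := by

  intro U V hU hUne hV hVne t ht
  obtain ⟨u, hu⟩ := hUne
  obtain ⟨v, hv⟩ := hVne
  rw [isOpen_iff_ball_subset] at hU hV
  obtain ⟨A, hA, hAU⟩ := hU u hu
  obtain ⟨B, hB, hBV⟩ := hV v hv
  set γ := SetRel.symmetrize (A ∩ B) with hγ
  have hγmem : γ ∈ 𝓤 X := symmetrize_mem_uniformity (Filter.inter_mem hA hB)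
  obtain ⟨β, hβ, hshadow⟩ := h γ hγmem
  classical
  set x : T → X := fun s => if s = 1 then u else v with hx
  have hpo : IsPseudoOrbit β ({1} : Set T) x := by
    intro a ha s
    rcases ha with rfl
    simp only [one_smul, one_mul]
    exact refl_mem_uniformity hβ
  obtain ⟨p, hp⟩ := hshadow x hpo
  have h1 := hp 1
  have h2 := hp t
  simp only [hx, if_pos rfl, one_smul, if_neg ht] at h1 h2
  refine ⟨t • p, ⟨p, ?_, rfl⟩, ?_⟩
  · exact hAU h1.2.1
  · exact hBV h2.2.2
end

section
/- Let (T,(X,𝒦)) be a transformation semigroup. If (T,(X,𝒦)) has the shadowing property with respect to {e} and there exists t ∈ T with t ≠ e, then every nonempty open subset U of X is dense in X (i.e., the closure of U equals X). -/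
open scoped Uniformity

/-- Key claim: for any entourage `α` and any points `c d`, there is `p` with
`p` close to `c` and `t₀ • p` close to `d`. -/
lemma key_claim {T X : Type*} [Monoid T] [MulAction T X] [UniformSpace X]
    (h : ShadowingWrt T X ({1} : Set T)) {t₀ : T} (ht₀ : t₀ ≠ 1)
    {α : Set (X × X)} (hα : α ∈ 𝓤 X) (c d : X) :
    ∃ p : X, (p, c) ∈ α ∧ (t₀ • p, d) ∈ α := by
  obtain ⟨β, hβ, hsh⟩ := h α hα
  classical
  set x : T → X := fun s => if s = 1 then c else d with hx
  have hpo : IsPseudoOrbit β ({1} : Set T) x := by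
    intro a ha t
    rcases ha with rfl
    simpa [one_smul, one_mul] using refl_mem_uniformity hβ
  obtain ⟨p, hp⟩ := hsh x hpo
  refine ⟨p, ?_, ?_⟩
  · simpa [hx, one_smul] using hp 1
  · simpa [hx, ht₀] using hp t₀

theorem stmt8 {T X : Type*} [Monoid T] [MulAction T X] [UniformSpace X]
    [ContinuousConstSMul T X]
    (h : ShadowingWrt T X ({1} : Set T)) (ht : ∃ t : T, t ≠ 1) :
    ∀ U : Set X, IsOpen U → U.Nonempty → closure U = Set.univ := by
  obtain ⟨t₀, ht₀⟩ := ht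
  intro U hU ⟨u, hu⟩
  -- V = t₀⁻¹ U is open; show it is nonempty
  set V : Set X := (fun z : X => t₀ • z) ⁻¹' U with hV
  have hVopen : IsOpen V := (hU.preimage (continuous_const_smul t₀))
  obtain ⟨γ, hγ, hball⟩ := (isOpen_iff_ball_subset.mp hU) u hu
  have hγ' : SetRel.symmetrize γ ∈ 𝓤 X := symmetrize_mem_uniformity hγ
  obtain ⟨p₀, _, hp₀⟩ := key_claim h ht₀ hγ' u u
  have hp₀V : p₀ ∈ V := by
    have : (u, t₀ • p₀) ∈ γ :=
      (SetRel.symmetrize_subset_self) ((SetRel.comm (SetRel.symmetrize γ)).mp hp₀)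
    exact hball this
  -- Now show closure U = univ
  ext y
  simp only [Set.mem_univ, iff_true]
  rw [UniformSpace.mem_closure_iff_ball]
  intro W hW
  obtain ⟨δ, hδ, hδball⟩ := (isOpen_iff_ball_subset.mp hVopen) p₀ hp₀V
  have hsymm : SetRel.symmetrize (W ∩ δ) ∈ 𝓤 X :=
    symmetrize_mem_uniformity (Filter.inter_mem hW hδ)
  obtain ⟨p, hp1, hp2⟩ := key_claim h ht₀ hsymm p₀ y
  have hpV : p ∈ V := by
    have : (p₀, p) ∈ δ :=
      ((SetRel.symmetrize_subset_self) ((SetRel.comm (SetRel.symmetrize (W ∩ δ))).mp hp1)).2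
    exact hδball this
  refine ⟨t₀ • p, ?_, hpV⟩
  exact ((SetRel.symmetrize_subset_self) ((SetRel.comm (SetRel.symmetrize (W ∩ δ))).mp hp2)).1
end

section
/- A transformation semigroup (T,(X,𝒦)) has the shadowing property with respect to {e} if and only if either every element of T equals e, or the topology of X (the uniform topology of 𝒦) is trivial, i.e., the only open subsets of X are ∅ and X. -/
open scoped Uniformity Topology

theorem stmt9 {T X : Type*} [Monoid T] [MulAction T X] [UniformSpace X]
    [ContinuousConstSMul T X] :
    ShadowingWrt T X ({1} : Set T) ↔
      (∀ t : T, t = 1) ∨ (∀ U : Set X, IsOpen U → U = ∅ ∨ U = Set.univ) := by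
  constructor
  · intro hS
    by_cases ht : ∀ t : T, t = 1
    · exact Or.inl ht
    right
    push_neg at ht
    obtain ⟨t₀, ht₀⟩ := ht
    -- Key fact: for every entourage α and points a b, there is p with
    -- (p, a) ∈ α and (t₀ • p, b) ∈ α.
    have key : ∀ α ∈ 𝓤 X, ∀ a b : X, ∃ p : X, (p, a) ∈ α ∧ (t₀ • p, b) ∈ α := by
      intro α hα a b
      classical
      obtain ⟨β, hβ, hsh⟩ := hS α hα
      set x : T → X := fun t => if t = 1 then a else b with hxdef
      have hpo : IsPseudoOrbit β ({1} : Set T) x := by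
        intro c hc t
        rcases Set.mem_singleton_iff.mp hc with rfl
        simp only [one_smul, one_mul]
        exact refl_mem_uniformity hβ
      obtain ⟨p, hp⟩ := hsh x hpo
      refine ⟨p, ?_, ?_⟩
      · have h1 := hp 1
        simpa [x] using h1
      · have h2 := hp t₀
        simpa [x, ht₀] using h2
    rcases isEmpty_or_nonempty X with hX | hX
    · intro U _
      left
      exact Set.eq_empty_of_isEmpty U
    obtain ⟨u⟩ := hX
    -- every entourage is all of X × X
    have claim : ∀ θ ∈ 𝓤 X, ∀ z : X, (t₀ • u, z) ∈ θ := by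
      intro θ hθ z
      obtain ⟨γ, hγ, hγθ⟩ := comp_mem_uniformity_sets hθ
      have hc : Continuous fun p : X => t₀ • p := continuous_const_smul t₀
      have hb : UniformSpace.ball (t₀ • u) γ ∈ 𝓝 (t₀ • u) :=
        UniformSpace.ball_mem_nhds _ hγ
      have hpre : (fun p : X => t₀ • p) ⁻¹' UniformSpace.ball (t₀ • u) γ ∈ 𝓝 u :=
        hc.continuousAt.preimage_mem_nhds hb
      obtain ⟨δ, hδ, hball⟩ := UniformSpace.mem_nhds_iff.mp hpre
      obtain ⟨p, hp1, hp2⟩ :=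
        key (SetRel.symmetrize (δ ∩ γ)) (symmetrize_mem_uniformity (Filter.inter_mem hδ hγ)) u z
      have hup : (u, p) ∈ δ ∩ γ :=
        SetRel.symmetrize_subset_self ((inferInstance : (SetRel.symmetrize (δ ∩ γ)).IsSymm).symm _ _ hp1)
      have h1 : (t₀ • u, t₀ • p) ∈ γ := hball hup.1
      have h2 : (t₀ • p, z) ∈ γ := (SetRel.symmetrize_subset_self hp2).2
      exact hγθ ⟨t₀ • p, h1, h2⟩
    have huniv : ∀ η ∈ 𝓤 X, ∀ y z : X, (y, z) ∈ η := by
      intro η hη y z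
      obtain ⟨θ, hθ, hsymm, hcomp⟩ := comp_symm_mem_uniformity_sets hη
      have hy : (t₀ • u, y) ∈ θ := claim θ hθ y
      have hz : (t₀ • u, z) ∈ θ := claim θ hθ z
      exact hcomp ⟨t₀ • u, hsymm.symm _ _ hy, hz⟩
    intro U hU
    rcases U.eq_empty_or_nonempty with h | ⟨w, hw⟩
    · exact Or.inl h
    right
    obtain ⟨η, hη, hball⟩ := (isOpen_iff_ball_subset.mp hU) w hw
    ext z
    simp only [Set.mem_univ, iff_true]
    exact hball (huniv η hη w z)
  · intro h α hα
    refine ⟨α, hα, ?_⟩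
    intro x _
    rcases h with ht | htop
    · refine ⟨x 1, fun t => ?_⟩
      rw [ht t, one_smul]
      exact refl_mem_uniformity hα
    · have hall : ∀ a b : X, (a, b) ∈ α := by
        intro a b
        have h1 := UniformSpace.ball_mem_nhds a hα
        rcases _root_.mem_nhds_iff.mp h1 with ⟨V, hVs, hVo, haV⟩
        rcases htop V hVo with rfl | rfl
        · exact absurd haV (Set.notMem_empty a)
        · exact hVs (Set.mem_univ b)
      exact ⟨x 1, fun t => hall _ _⟩
end

section
/- The transformation group (ℤ, X) given by the iterates of f does not have the shadowing property (pseudo orbit tracing property); that is, for every nonempty finite subset A of ℤ, (ℤ, X) does not have the shadowing property with respect to A. -/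
open scoped Uniformity

/-- The phase space `X = {1/n : n ∈ ℤ, n ≠ 0} ∪ {0}` as a subspace of `ℝ`. -/
def Xset : Set ℝ := {x : ℝ | (∃ n : ℤ, n ≠ 0 ∧ x = 1 / (n : ℝ)) ∨ x = 0}

/-- The `ℤ`-system generated by the permutation `e` has the shadowing property
with respect to `A ⊆ ℤ`. -/
def ZShadowingWrt (e : Equiv.Perm ↥Xset) (A : Set ℤ) : Prop :=
  ∀ α ∈ 𝓤 ↥Xset, ∃ β ∈ 𝓤 ↥Xset, ∀ x : ℤ → ↥Xset,
    (∀ a ∈ A, ∀ t : ℤ, ((e ^ a) (x t), x (a + t)) ∈ β) →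
    ∃ p : ↥Xset, ∀ t : ℤ, ((e ^ t) p, x t) ∈ α

lemma memX (m : ℤ) (hm : m ≠ 0) : (1 / (m:ℝ)) ∈ Xset := Or.inl ⟨m, hm, rfl⟩

lemma distval (u v : ↥Xset) : dist u v = |(u:ℝ) - (v:ℝ)| := by
  rw [Subtype.dist_eq, Real.dist_eq]

lemma inv_abs_le (c d : ℤ) (hd : 0 < d) (hn : d.natAbs ≤ c.natAbs) : |1/(c:ℝ)| ≤ 1/(d:ℝ) := by
  have h : d ≤ |c| := by rw [Int.abs_eq_natAbs]; omega
  rw [abs_div, abs_one, ← Int.cast_abs]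
  have hd' : (0:ℝ) < (d:ℤ) := by exact_mod_cast hd
  exact one_div_le_one_div_of_le hd' (by exact_mod_cast h)

section
variable (e : Equiv.Perm ↥Xset)
    (hodd : ∀ (x : ↥Xset) (n : ℤ), Odd n → (x : ℝ) = 1 / (n : ℝ) →
      (e x : ℝ) = 1 / ((n : ℝ) - 2))

include hodd in
lemma step_inv (m : ℤ) (hm : Odd m) (x : ↥Xset) (hx : (x:ℝ) = 1 / (m:ℝ)) :
    ((e⁻¹ x : ↥Xset) : ℝ) = 1 / ((m:ℝ) + 2) := by
  have hm2 : Odd (m + 2) := by rcases hm with ⟨k, hk⟩; exact ⟨k+1, by omega⟩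
  have hne : m + 2 ≠ 0 := by rintro h; rw [h] at hm2; exact (by decide : ¬ Odd (0:ℤ)) hm2
  set y : ↥Xset := ⟨1 / ((m:ℝ) + 2), by have := memX (m+2) hne; push_cast at this ⊢; convert this using 2⟩ with hy
  have hval : (y : ℝ) = 1 / (((m + 2 : ℤ)):ℝ) := by rw [hy]; push_cast; ring_nf
  have := hodd y (m+2) hm2 hval
  have hey : (e y : ℝ) = (x : ℝ) := by rw [this, hx]; push_cast; ring_nf
  have : e y = x := Subtype.ext hey
  have : y = e⁻¹ x := by rw [← this]; simp
  rw [← this, hy]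

include hodd in
lemma orb : ∀ (t n : ℤ), Odd n → ∀ x : ↥Xset, (x:ℝ) = 1 / (n:ℝ) →
    (((e ^ t) x : ↥Xset) : ℝ) = 1 / ((n : ℝ) - 2 * t) := by
  intro t
  induction t using Int.induction_on with
  | zero => intro n hn x hx; simpa using hx
  | succ k ih =>
    intro n hn x hx
    have h1 : (e ^ ((k:ℤ)+1)) x = e ((e ^ (k:ℤ)) x) := by
      rw [show ((k:ℤ)+1) = 1 + k by ring, zpow_add, zpow_one, Equiv.Perm.mul_apply]
    have h2 := ih n hn x hx
    have hodd' : Odd (n - 2*k) := by rcases hn with ⟨j, hj⟩; exact ⟨j - k, by omega⟩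
    have h3 := hodd ((e ^ (k:ℤ)) x) (n - 2*k) hodd' (by rw [h2]; push_cast; ring_nf)
    rw [h1, h3]; push_cast; ring_nf
  | pred k ih =>
    intro n hn x hx
    have h1 : (e ^ (-(k:ℤ)-1)) x = e⁻¹ ((e ^ (-(k:ℤ))) x) := by
      rw [show -(k:ℤ)-1 = -1 + -(k:ℤ) by ring, zpow_add, zpow_neg_one, Equiv.Perm.mul_apply]
    have h2 := ih n hn x hx
    have hodd' : Odd (n + 2*k) := by rcases hn with ⟨j, hj⟩; exact ⟨j + k, by omega⟩
    have h3 := step_inv e hodd (n + 2*k) hodd' ((e ^ (-(k:ℤ))) x) (by rw [h2]; push_cast; ring_nf)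
    rw [h1, h3]; push_cast; ring_nf
end

theorem stmt10 (e : Equiv.Perm ↥Xset)
    (hodd : ∀ (x : ↥Xset) (n : ℤ), Odd n → (x : ℝ) = 1 / (n : ℝ) →
      (e x : ℝ) = 1 / ((n : ℝ) - 2))
    (hother : ∀ x : ↥Xset, (¬ ∃ n : ℤ, Odd n ∧ (x : ℝ) = 1 / (n : ℝ)) →
      (e x : ℝ) = -(x : ℝ)) :
    ∀ A : Set ℤ, A.Nonempty → A.Finite → ¬ ZShadowingWrt e A := by
  intro A hAne hAfin h
  have hα : {q : ↥Xset × ↥Xset | dist q.1 q.2 < 1/4} ∈ 𝓤 ↥Xset :=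
    Metric.dist_mem_uniformity (by norm_num)
  obtain ⟨β, hβ, hsh⟩ := h _ hα
  obtain ⟨δ, hδ0, hβδ⟩ := Metric.mem_uniformity_dist.mp hβ
  -- M bounds the elements of A
  set M : ℤ := ((hAfin.toFinset.sup fun a => a.natAbs : ℕ) : ℤ) with hM_def
  have hM : ∀ a ∈ A, |a| ≤ M := by
    intro a ha
    have : a.natAbs ≤ hAfin.toFinset.sup fun a => a.natAbs :=
      Finset.le_sup (by simpa using ha)
    rw [hM_def, Int.abs_eq_natAbs]
    exact_mod_cast this
  have hM0 : 0 ≤ M := by positivity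
  -- choose K
  obtain ⟨K0, hK0⟩ := exists_nat_one_div_lt (half_pos hδ0)
  set K : ℤ := (K0 : ℤ) + 1 with hK_def
  have hK1 : 1 ≤ K := by omega
  have hKδ : 1 / (K:ℝ) < δ / 2 := by
    have : ((K:ℤ):ℝ) = (K0:ℝ) + 1 := by push_cast [hK_def]; ring
    rw [this]; exact hK0
  have hKpos : (0:ℝ) < (K:ℤ) := by exact_mod_cast hK1
  set T : ℤ := M + K with hT_def
  have hT1 : 1 ≤ T := by omega
  -- the pseudo orbit
  have hne1 : ∀ t : ℤ, (1 - 2*t) ≠ 0 := by intro t; omega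
  have hne2 : ∀ t : ℤ, (1 + 4*T - 2*t) ≠ 0 := by intro t; omega
  have hodd1 : ∀ t : ℤ, Odd (1 - 2*t) := by intro t; rw [Int.odd_iff]; omega
  have hodd2 : ∀ t : ℤ, Odd (1 + 4*T - 2*t) := by intro t; rw [Int.odd_iff]; omega
  set x : ℤ → ↥Xset := fun t =>
    if t ≤ T then ⟨1/((1 - 2*t : ℤ):ℝ), memX _ (hne1 t)⟩
    else ⟨1/((1 + 4*T - 2*t : ℤ):ℝ), memX _ (hne2 t)⟩ with hx_def
  have hx1 : ∀ t : ℤ, t ≤ T → (x t : ℝ) = 1/((1 - 2*t : ℤ):ℝ) := by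
    intro t ht; rw [hx_def]; simp [ht]
  have hx2 : ∀ t : ℤ, ¬ (t ≤ T) → (x t : ℝ) = 1/((1 + 4*T - 2*t : ℤ):ℝ) := by
    intro t ht; rw [hx_def]; simp [ht]
  -- it is a β-pseudo orbit
  have hpo : ∀ a ∈ A, ∀ t : ℤ, ((e ^ a) (x t), x (a + t)) ∈ β := by
    intro a ha t
    have haM := hM a ha
    rw [abs_le] at haM
    apply hβδ
    by_cases h1 : t ≤ T
    · have hv : ((e ^ a) (x t) : ℝ) = 1 / (((1 - 2*t : ℤ):ℝ) - 2 * (a:ℝ)) :=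
        orb e hodd a (1 - 2*t) (hodd1 t) (x t) (hx1 t h1)
      by_cases h2 : a + t ≤ T
      · rw [distval, hv, hx1 _ h2]
        have : (((1 - 2*t : ℤ):ℝ) - 2 * (a:ℝ)) = (((1 - 2*(a+t) : ℤ)):ℝ) := by push_cast; ring
        rw [this]; simpa using hδ0
      · rw [distval, hv, hx2 _ h2]
        have e1 : |1 / (((1 - 2*t : ℤ):ℝ) - 2 * (a:ℝ))| ≤ 1 / ((2*K : ℤ):ℝ) := by
          have : (((1 - 2*t : ℤ):ℝ) - 2 * (a:ℝ)) = (((1 - 2*(a+t) : ℤ)):ℝ) := by push_cast; ring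
          rw [this]
          exact inv_abs_le _ (2*K) (by omega) (by omega)
        have e2 : |1 / (((1 + 4*T - 2*(a+t) : ℤ)):ℝ)| ≤ 1 / ((2*K : ℤ):ℝ) := by
          exact inv_abs_le _ (2*K) (by omega) (by omega)
        have h2K : 1 / ((2*K : ℤ):ℝ) = (1/2) * (1/((K:ℤ):ℝ)) := by push_cast; ring
        have habs := abs_sub (1 / (((1 - 2*t : ℤ):ℝ) - 2 * (a:ℝ))) (1 / (((1 + 4*T - 2*(a+t) : ℤ)):ℝ))
        rw [h2K] at e1 e2
        calc |1 / (((1 - 2*t : ℤ):ℝ) - 2 * (a:ℝ)) - 1 / (((1 + 4*T - 2*(a+t) : ℤ)):ℝ)|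
            ≤ _ + _ := abs_sub _ _
          _ < δ := by linarith
    · have hv : ((e ^ a) (x t) : ℝ) = 1 / (((1 + 4*T - 2*t : ℤ):ℝ) - 2 * (a:ℝ)) :=
        orb e hodd a (1 + 4*T - 2*t) (hodd2 t) (x t) (hx2 t h1)
      by_cases h2 : a + t ≤ T
      · rw [distval, hv, hx1 _ h2]
        have e1 : |1 / (((1 + 4*T - 2*t : ℤ):ℝ) - 2 * (a:ℝ))| ≤ 1 / ((2*K : ℤ):ℝ) := by
          have : (((1 + 4*T - 2*t : ℤ):ℝ) - 2 * (a:ℝ)) = (((1 + 4*T - 2*(a+t) : ℤ)):ℝ) := by push_cast; ring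
          rw [this]
          exact inv_abs_le _ (2*K) (by omega) (by omega)
        have e2 : |1 / (((1 - 2*(a+t) : ℤ)):ℝ)| ≤ 1 / ((2*K : ℤ):ℝ) := by
          exact inv_abs_le _ (2*K) (by omega) (by omega)
        have h2K : 1 / ((2*K : ℤ):ℝ) = (1/2) * (1/((K:ℤ):ℝ)) := by push_cast; ring
        rw [h2K] at e1 e2
        calc |1 / (((1 + 4*T - 2*t : ℤ):ℝ) - 2 * (a:ℝ)) - 1 / (((1 - 2*(a+t) : ℤ)):ℝ)|
            ≤ _ + _ := abs_sub _ _
          _ < δ := by linarith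
      · rw [distval, hv, hx2 _ h2]
        have : (((1 + 4*T - 2*t : ℤ):ℝ) - 2 * (a:ℝ)) = (((1 + 4*T - 2*(a+t) : ℤ)):ℝ) := by push_cast; ring
        rw [this]; simpa using hδ0
  obtain ⟨p, hp⟩ := hsh x hpo
  -- p must be 1
  have h0 := hp 0
  simp only [Set.mem_setOf_eq, zpow_zero, Equiv.Perm.one_apply] at h0
  rw [distval, hx1 0 (by omega)] at h0
  have hx0 : ((1 - 2*(0:ℤ) : ℤ):ℝ) = 1 := by norm_num
  rw [hx0] at h0
  have hp1 : (p : ℝ) = 1 := by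
    rcases p.2 with ⟨n, hn0, hn⟩ | h0'
    · rw [hn] at h0 ⊢
      rw [abs_lt] at h0
      have h34 : (3:ℝ)/4 < 1/(n:ℝ) := by linarith
      have hnpos : 0 < n := by
        by_contra hc
        push_neg at hc
        have : n ≤ -1 := by omega
        have : (n:ℝ) ≤ -1 := by exact_mod_cast this
        have : 1/(n:ℝ) < 0 := one_div_neg.mpr (by linarith)
        linarith
      have hn1 : n = 1 := by
        by_contra hc
        have : 2 ≤ n := by omega
        have h2 : (2:ℝ) ≤ (n:ℝ) := by exact_mod_cast this
        have : 1/(n:ℝ) ≤ 1/2 := one_div_le_one_div_of_le (by norm_num) h2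
        linarith
      rw [hn1]; norm_num
    · rw [h0'] at h0; rw [abs_lt] at h0; norm_num at h0
  -- contradiction at t = 2T
  have h2T := hp (2*T)
  simp only [Set.mem_setOf_eq] at h2T
  have hv : ((e ^ (2*T)) p : ℝ) = 1 / ((1:ℝ) - 2 * (2*T : ℤ)) := by
    have := orb e hodd (2*T) 1 (by decide) p (by rw [hp1]; norm_num)
    simpa using this
  rw [distval, hv, hx2 (2*T) (by omega)] at h2T
  have hxv : ((1 + 4*T - 2*(2*T) : ℤ):ℝ) = 1 := by push_cast; ring
  rw [hxv] at h2T
  have hsmall : |1 / ((1:ℝ) - 2 * (2*T : ℤ))| ≤ 1/((3:ℤ):ℝ) := by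
    have : ((1:ℝ) - 2 * (2*T : ℤ)) = ((1 - 4*T : ℤ):ℝ) := by push_cast; ring
    rw [this]
    exact inv_abs_le _ 3 (by omega) (by omega)
  rw [abs_lt] at h2T
  have h3 : ((3:ℤ):ℝ) = 3 := by norm_num
  rw [h3] at hsmall
  have := abs_le.mp hsmall
  linarith [this.1, this.2]
end

section
/- The transformation group (ℤ, X) given by the iterates of f has the shadowing property with respect to the set 2ℤ+1 of all odd integers; in particular, it has the 𝓘-shadowing property for the ideal 𝓘 = 𝒫(2ℤ+1) on ℤ. -/
open scoped Uniformity

/-- A point of `X` of the form `1/n` with `n` odd. -/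
def IsOddPt (x : ↥Xset) : Prop := ∃ n : ℤ, Odd n ∧ (x : ℝ) = 1 / (n : ℝ)

lemma odd_ne_zero' {n : ℤ} (h : Odd n) : n ≠ 0 := by
  rintro rfl; exact (Int.not_odd_iff_even.mpr Even.zero) h

lemma memX_s11 (n : ℤ) (hn : n ≠ 0) : (1 / (n:ℝ)) ∈ Xset := Or.inl ⟨n, hn, rfl⟩

lemma castX {n k : ℤ} (hn : n ≠ 0) (hk : k ≠ 0) (h : 1/(n:ℝ) = 1/(k:ℝ)) : n = k := by
  have hn' : (n:ℝ) ≠ 0 := Int.cast_ne_zero.mpr hn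
  have hk' : (k:ℝ) ≠ 0 := Int.cast_ne_zero.mpr hk
  field_simp at h
  exact_mod_cast h.symm

lemma inv_big {k : ℤ} (hk : k ≠ 0) (h3 : |k| ≤ 3) : (1:ℝ)/3 ≤ |1/(k:ℝ)| := by
  have h1 : (1:ℤ) ≤ |k| := by
    rcases hk.lt_or_gt with h|h
    · rw [abs_of_neg h]; omega
    · rw [abs_of_pos h]; omega
  have hk3 : |(k:ℝ)| ≤ 3 := by rw [← Int.cast_abs]; exact_mod_cast h3
  have hk1 : (1:ℝ) ≤ |(k:ℝ)| := by rw [← Int.cast_abs]; exact_mod_cast h1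
  rw [abs_div, abs_one]
  rw [div_le_div_iff₀ (by norm_num) (by linarith)]
  linarith

lemma inv_small {q : ℤ} (h4 : 4 ≤ |q|) : |1/(q:ℝ)| ≤ 1/4 := by
  have hq4 : (4:ℝ) ≤ |(q:ℝ)| := by rw [← Int.cast_abs]; exact_mod_cast h4
  rw [abs_div, abs_one]
  rw [div_le_div_iff₀ (by linarith) (by norm_num)]
  linarith

lemma gapX {q k : ℤ} (hq : q ≠ 0) (hk : k ≠ 0) (h3 : |k| ≤ 3) (hne : q ≠ k) :
    (1:ℝ)/12 ≤ |1/(q:ℝ) - 1/(k:ℝ)| := by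
  rcases le_or_gt 4 |q| with hbig | hsmall
  · have h1 := inv_big hk h3
    have h2 := inv_small hbig
    calc (1:ℝ)/12 ≤ |1/(k:ℝ)| - |1/(q:ℝ)| := by linarith
    _ ≤ |1/(k:ℝ) - 1/(q:ℝ)| := abs_sub_abs_le_abs_sub _ _
    _ = |1/(q:ℝ) - 1/(k:ℝ)| := abs_sub_comm _ _
  · have hq3 : -3 ≤ q ∧ q ≤ 3 := abs_le.mp (by omega)
    have hk3' : -3 ≤ k ∧ k ≤ 3 := abs_le.mp h3
    obtain ⟨hq1, hq2⟩ := hq3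
    obtain ⟨hk1, hk2⟩ := hk3'
    interval_cases q <;> interval_cases k <;> simp_all <;> rw [le_abs] <;> norm_num

lemma isolX {y : ℝ} (hy : y ∈ Xset) {k : ℤ} (hk : k ≠ 0) (hk3 : |k| ≤ 3)
    (h : |y - 1/(k:ℝ)| < 1/24) : y = 1/(k:ℝ) := by
  rcases hy with ⟨q, hq, rfl⟩ | rfl
  · by_cases hne : q = k
    · rw [hne]
    · exfalso; have := gapX hq hk hk3 hne; linarith
  · exfalso
    have := inv_big hk hk3
    rw [zero_sub, abs_neg] at h
    linarith

lemma esymm_oddPt (e : Equiv.Perm ↥Xset)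
    (hodd : ∀ (x : ↥Xset) (n : ℤ), Odd n → (x : ℝ) = 1 / (n : ℝ) →
      (e x : ℝ) = 1 / ((n : ℝ) - 2))
    (hother : ∀ x : ↥Xset, (¬ ∃ n : ℤ, Odd n ∧ (x : ℝ) = 1 / (n : ℝ)) →
      (e x : ℝ) = -(x : ℝ))
    {x : ↥Xset} {n : ℤ} (hn : Odd n) (hx : (x:ℝ) = 1/(n:ℝ)) :
    ((e.symm x : ↥Xset) : ℝ) = 1/((n:ℝ)+2) := by
  set z := e.symm x with hz
  have hex : e z = x := e.apply_symm_apply x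
  by_cases hzodd : IsOddPt z
  · obtain ⟨k, hk, hzk⟩ := hzodd
    have h1 : (x:ℝ) = 1/((k:ℝ)-2) := by rw [← hex]; exact hodd z k hk hzk
    have h2 : 1/(n:ℝ) = 1/(((k-2:ℤ)):ℝ) := by push_cast; rw [← hx, h1]
    have : n = k - 2 := castX (odd_ne_zero' hn) (odd_ne_zero' (by
      rcases hk with ⟨c, rfl⟩; exact ⟨c - 1, by ring⟩)) h2
    rw [hzk]; subst this; push_cast; ring_nf
  · have h1 : (e z : ℝ) = -(z:ℝ) := hother z hzodd
    rw [hex] at h1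
    exfalso
    rcases z.2 with ⟨q, hq, hzq⟩ | h0
    · apply hzodd
      refine ⟨q, ?_, hzq⟩
      have : 1/(n:ℝ) = 1/(((-q:ℤ)):ℝ) := by push_cast; rw [← hx, h1, hzq]; ring
      have := castX (odd_ne_zero' hn) (by omega) this
      rw [Int.odd_iff] at hn ⊢; omega
    · rw [h0] at h1
      rw [hx] at h1
      have : (n:ℝ) ≠ 0 := Int.cast_ne_zero.mpr (odd_ne_zero' hn)
      simp at h1
      exact odd_ne_zero' hn h1

lemma e_notPt (e : Equiv.Perm ↥Xset)
    (hother : ∀ x : ↥Xset, (¬ ∃ n : ℤ, Odd n ∧ (x : ℝ) = 1 / (n : ℝ)) →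
      (e x : ℝ) = -(x : ℝ))
    {x : ↥Xset} (hx : ¬ IsOddPt x) :
    (e x : ℝ) = -(x:ℝ) ∧ ¬ IsOddPt (e x) := by
  have h1 : (e x : ℝ) = -(x:ℝ) := hother x hx
  refine ⟨h1, ?_⟩
  rintro ⟨k, hk, hek⟩
  apply hx
  refine ⟨-k, by rw [Int.odd_iff] at hk ⊢; omega, ?_⟩
  have : (x:ℝ) = -(e x : ℝ) := by rw [h1]; ring
  rw [this, hek]; push_cast; ring

lemma esymm_notPt (e : Equiv.Perm ↥Xset)
    (hodd : ∀ (x : ↥Xset) (n : ℤ), Odd n → (x : ℝ) = 1 / (n : ℝ) →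
      (e x : ℝ) = 1 / ((n : ℝ) - 2))
    (hother : ∀ x : ↥Xset, (¬ ∃ n : ℤ, Odd n ∧ (x : ℝ) = 1 / (n : ℝ)) →
      (e x : ℝ) = -(x : ℝ))
    {x : ↥Xset} (hx : ¬ IsOddPt x) :
    ((e.symm x : ↥Xset) : ℝ) = -(x:ℝ) ∧ ¬ IsOddPt (e.symm x) := by
  set z := e.symm x with hz
  have hex : e z = x := e.apply_symm_apply x
  have hznot : ¬ IsOddPt z := by
    rintro ⟨k, hk, hzk⟩
    apply hx
    refine ⟨k - 2, by rw [Int.odd_iff] at hk ⊢; omega, ?_⟩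
    rw [← hex]
    have := hodd z k hk hzk
    rw [this]; push_cast; ring_nf
  have h1 : (e z : ℝ) = -(z:ℝ) := hother z hznot
  rw [hex] at h1
  exact ⟨by linarith, hznot⟩

lemma zpow_chain (e : Equiv.Perm ↥Xset)
    (hodd : ∀ (x : ↥Xset) (n : ℤ), Odd n → (x : ℝ) = 1 / (n : ℝ) →
      (e x : ℝ) = 1 / ((n : ℝ) - 2))
    (hother : ∀ x : ↥Xset, (¬ ∃ n : ℤ, Odd n ∧ (x : ℝ) = 1 / (n : ℝ)) →
      (e x : ℝ) = -(x : ℝ)) :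
    ∀ (t : ℤ) (x : ↥Xset) (n : ℤ), Odd n → (x:ℝ) = 1/(n:ℝ) →
    (((e^t) x : ↥Xset) : ℝ) = 1/((n:ℝ) - 2*(t:ℝ)) := by
  intro t
  induction t using Int.induction_on with
  | zero => intro x n hn hx; simpa using hx
  | succ i ih =>
    intro x n hn hx
    have hstep : (e^((i:ℤ)+1)) x = (e^(i:ℤ)) (e x) := by
      rw [zpow_add_one]; rfl
    rw [hstep]
    have hex : (e x : ℝ) = 1/(((n - 2:ℤ)):ℝ) := by
      rw [hodd x n hn hx]; push_cast; ring_nf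
    have := ih (e x) (n-2) (by rcases hn with ⟨c, rfl⟩; exact ⟨c-1, by ring⟩) hex
    rw [this]; push_cast; ring_nf
  | pred i ih =>
    intro x n hn hx
    have hstep : (e^(-(i:ℤ)-1)) x = (e^(-(i:ℤ))) (e.symm x) := by
      rw [zpow_sub_one]; rfl
    rw [hstep]
    have hex : ((e.symm x : ↥Xset) : ℝ) = 1/(((n + 2:ℤ)):ℝ) := by
      rw [esymm_oddPt e hodd hother hn hx]; push_cast; ring_nf
    have := ih (e.symm x) (n+2) (by rcases hn with ⟨c, rfl⟩; exact ⟨c+1, by ring⟩) hex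
    rw [this]; push_cast; ring_nf

lemma zpow_flip (e : Equiv.Perm ↥Xset)
    (hodd : ∀ (x : ↥Xset) (n : ℤ), Odd n → (x : ℝ) = 1 / (n : ℝ) →
      (e x : ℝ) = 1 / ((n : ℝ) - 2))
    (hother : ∀ x : ↥Xset, (¬ ∃ n : ℤ, Odd n ∧ (x : ℝ) = 1 / (n : ℝ)) →
      (e x : ℝ) = -(x : ℝ)) :
    ∀ (t : ℤ) (x : ↥Xset), ¬ IsOddPt x →
    ¬ IsOddPt ((e^t) x) ∧ (((e^t) x : ↥Xset) : ℝ) = (-1:ℝ)^t * (x:ℝ) := by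
  intro t
  induction t using Int.induction_on with
  | zero => intro x hx; simpa using hx
  | succ i ih =>
    intro x hx
    have hstep : (e^((i:ℤ)+1)) x = (e^(i:ℤ)) (e x) := by
      rw [zpow_add_one]; rfl
    obtain ⟨hv, hnot⟩ := e_notPt e hother hx
    obtain ⟨h1, h2⟩ := ih (e x) hnot
    rw [hstep]
    refine ⟨h1, ?_⟩
    rw [h2, hv, zpow_add_one₀ (by norm_num : (-1:ℝ) ≠ 0)]
    ring
  | pred i ih =>
    intro x hx
    have hstep : (e^(-(i:ℤ)-1)) x = (e^(-(i:ℤ))) (e.symm x) := by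
      rw [zpow_sub_one]; rfl
    obtain ⟨hv, hnot⟩ := esymm_notPt e hodd hother hx
    obtain ⟨h1, h2⟩ := ih (e.symm x) hnot
    rw [hstep]
    refine ⟨h1, ?_⟩
    rw [h2, hv, zpow_sub_one₀ (by norm_num : (-1:ℝ) ≠ 0)]
    ring

theorem stmt11 (e : Equiv.Perm ↥Xset)
    (hodd : ∀ (x : ↥Xset) (n : ℤ), Odd n → (x : ℝ) = 1 / (n : ℝ) →
      (e x : ℝ) = 1 / ((n : ℝ) - 2))
    (hother : ∀ x : ↥Xset, (¬ ∃ n : ℤ, Odd n ∧ (x : ℝ) = 1 / (n : ℝ)) →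
      (e x : ℝ) = -(x : ℝ)) :
    ZShadowingWrt e {n : ℤ | Odd n} ∧
      ∃ A ∈ {B : Set ℤ | B ⊆ {n : ℤ | Odd n}}, A.Nonempty ∧ ZShadowingWrt e A := by
  have hdist : ∀ (u v : ↥Xset), dist u v = |(u:ℝ) - (v:ℝ)| := fun u v => by
    rw [Subtype.dist_eq, Real.dist_eq]
  have main : ZShadowingWrt e {n : ℤ | Odd n} := by
    intro α hα
    rw [Metric.mem_uniformity_dist] at hα
    obtain ⟨ε, hε, hα⟩ := hα
    set δ := min (ε/3) (1/24 : ℝ) with hδdef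
    have hδpos : 0 < δ := lt_min (by linarith) (by norm_num)
    have hδ24 : δ ≤ 1/24 := min_le_right _ _
    have hδε : δ ≤ ε/3 := min_le_left _ _
    refine ⟨{p : ↥Xset × ↥Xset | dist p.1 p.2 < δ}, Metric.dist_mem_uniformity hδpos, ?_⟩
    intro x hx
    simp only [Set.mem_setOf_eq] at hx
    by_cases hcase : ∃ t₀ : ℤ, IsOddPt (x t₀)
    · -- chain case
      obtain ⟨t₀, m, hm, hxt₀⟩ := hcase
      have step : ∀ (s n : ℤ), Odd n → ((x s : ℝ) = 1/(n:ℝ)) →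
          ∀ t : ℤ, Odd (t - s) → |(x t : ℝ) - 1/(((n - 2*(t - s) : ℤ)):ℝ)| < δ := by
        intro s n hn hxs t hts
        have h1 := hx (t - s) hts s
        rw [hdist] at h1
        rw [zpow_chain e hodd hother (t-s) (x s) n hn hxs] at h1
        have hidx : t - s + s = t := by ring
        rw [hidx] at h1
        rw [abs_sub_comm] at h1
        have heq : 1/(((n - 2*(t - s) : ℤ)):ℝ) = 1/((n:ℝ) - 2*(((t - s : ℤ)):ℝ)) := by
          push_cast; ring_nf
        rw [heq]
        exact h1
      obtain ⟨c, hc⟩ := hm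
      obtain ⟨j, kk, hjodd, hkk, hmjk⟩ :
          ∃ j kk : ℤ, Odd j ∧ (kk = 1 ∨ kk = 3) ∧ m - 2*j = kk := by
        rcases Int.even_or_odd c with ⟨d, hd⟩ | hcodd
        · exact ⟨c - 1, 3, ⟨d - 1, by omega⟩, Or.inr rfl, by omega⟩
        · exact ⟨c, 1, hcodd, Or.inl rfl, by omega⟩
      have hm' : Odd m := ⟨c, hc⟩
      set s := t₀ + j with hs
      have hkkodd : Odd kk := by rcases hkk with rfl | rfl; exacts [odd_one, ⟨1, by ring⟩]
      have hanchor : (x s : ℝ) = 1/((kk:ℤ):ℝ) := by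
        have hpar : Odd (s - t₀) := by
          have : s - t₀ = j := by omega
          rw [this]; exact hjodd
        have h1 := step t₀ m hm' hxt₀ s hpar
        have h2 : m - 2*(s - t₀) = kk := by omega
        rw [h2] at h1
        exact isolX (x s).2 (odd_ne_zero' hkkodd)
          (by rcases hkk with rfl | rfl <;> norm_num)
          (lt_of_lt_of_le h1 hδ24)
      have key : ∀ t : ℤ, |(x t : ℝ) - 1/(((m - 2*(t - t₀) : ℤ)):ℝ)| < δ := by
        intro t
        rcases Int.even_or_odd (t - t₀) with heven | hoddt
        · have htso : Odd (t - s) := by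
            obtain ⟨d, hd⟩ := heven
            obtain ⟨dj, hdj⟩ := hjodd
            exact ⟨d - dj - 1, by omega⟩
          have h1 := step s kk hkkodd hanchor t htso
          have h2 : kk - 2*(t - s) = m - 2*(t - t₀) := by omega
          rw [h2] at h1
          exact h1
        · exact step t₀ m hm' hxt₀ t hoddt
      have hmodd2 : Odd (m + 2*t₀) := ⟨c + t₀, by omega⟩
      refine ⟨⟨1/(((m + 2*t₀ : ℤ)):ℝ), memX_s11 _ (odd_ne_zero' hmodd2)⟩, ?_⟩
      intro t
      apply hα
      rw [hdist]
      have hv := zpow_chain e hodd hother t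
        ⟨1/(((m + 2*t₀ : ℤ)):ℝ), memX_s11 _ (odd_ne_zero' hmodd2)⟩ (m + 2*t₀) hmodd2 rfl
      rw [hv]
      have h4 : 1/((((m + 2*t₀ : ℤ)):ℝ) - 2*(t:ℝ)) = 1/(((m - 2*(t - t₀) : ℤ)):ℝ) := by
        push_cast; ring_nf
      rw [h4, abs_sub_comm]
      have := key t
      linarith
    · -- flip case
      push_neg at hcase
      refine ⟨x 0, ?_⟩
      intro t
      apply hα
      rw [hdist]
      obtain ⟨hnot, hval⟩ := zpow_flip e hodd hother t (x 0) (hcase 0)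
      rw [hval]
      rcases Int.even_or_odd t with hteven | htodd
      · have hpow : (-1:ℝ)^t = 1 := Even.neg_one_zpow hteven
        rw [hpow, one_mul]
        have h1 := hx 1 odd_one (t - 1)
        rw [hdist] at h1
        have he1 : ((e^(1:ℤ)) (x (t-1)) : ℝ) = -(x (t-1) : ℝ) := by
          rw [zpow_one]
          exact (e_notPt e hother (hcase (t-1))).1
        have hidx : 1 + (t - 1) = t := by ring
        rw [hidx, he1] at h1
        have htm1odd : Odd (t - 1) := by
          obtain ⟨d, hd⟩ := hteven
          exact ⟨d - 1, by omega⟩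
        have h2 := hx (t-1) htm1odd 0
        rw [hdist] at h2
        obtain ⟨_, hv2⟩ := zpow_flip e hodd hother (t-1) (x 0) (hcase 0)
        rw [hv2] at h2
        have hpow2 : (-1:ℝ)^(t-1) = -1 := Odd.neg_one_zpow htm1odd
        rw [hpow2] at h2
        rw [show (t:ℤ) - 1 + 0 = t - 1 from by ring] at h2
        have e1' : |(x (t-1) : ℝ) + (x t : ℝ)| < δ := by
          have hh : -(x (t-1) : ℝ) - (x t : ℝ) = -((x (t-1) : ℝ) + (x t : ℝ)) := by ring
          rwa [hh, abs_neg] at h1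
        have e2' : |(x 0 : ℝ) + (x (t-1) : ℝ)| < δ := by
          have hh : (-1:ℝ) * (x 0 : ℝ) - (x (t-1) : ℝ) = -((x 0 : ℝ) + (x (t-1) : ℝ)) := by
            ring
          rwa [hh, abs_neg] at h2
        have htri : |(x 0 : ℝ) - (x t : ℝ)| ≤
            |(x 0 : ℝ) + (x (t-1) : ℝ)| + |(x (t-1) : ℝ) + (x t : ℝ)| := by
          calc |(x 0 : ℝ) - (x t : ℝ)|
              = |((x 0 : ℝ) + (x (t-1) : ℝ)) + (-((x (t-1) : ℝ) + (x t : ℝ)))| := by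
                rw [show (x 0 : ℝ) - (x t : ℝ)
                  = ((x 0 : ℝ) + (x (t-1) : ℝ)) + (-((x (t-1) : ℝ) + (x t : ℝ))) from by ring]
          _ ≤ |(x 0 : ℝ) + (x (t-1) : ℝ)| + |-((x (t-1) : ℝ) + (x t : ℝ))| := abs_add_le _ _
          _ = |(x 0 : ℝ) + (x (t-1) : ℝ)| + |(x (t-1) : ℝ) + (x t : ℝ)| := by rw [abs_neg]
        linarith
      · have h1 := hx t htodd 0
        rw [hdist] at h1
        obtain ⟨_, hv2⟩ := zpow_flip e hodd hother t (x 0) (hcase 0)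
        rw [hv2] at h1
        rw [show (t:ℤ) + 0 = t from by ring] at h1
        linarith
  exact ⟨main, {n : ℤ | Odd n}, fun _ h => h, ⟨1, odd_one⟩, main⟩
end

section
/- For every entourage μ of X = (0,∞) (equivalently, for every δ > 0) there exist distinct x, y ∈ (0,∞) such that (xⁿ, yⁿ) ∈ μ (respectively |xⁿ − yⁿ| < δ) for every integer n ≥ 0. Consequently, the transformation semigroup given by the multiplicative monoid (ℤ, ×) acting on X = (0,∞) by n·x = xⁿ is not 𝓘-expansive for the ideal 𝓘 = 𝒫({n ∈ ℤ : n ≤ −1}) of all sets of negative integers. -/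
open scoped Uniformity

/-- The action of the multiplicative monoid `(ℤ, ×)` on `(0, ∞)` by `n • x = x ^ n`. -/
noncomputable def actZ (n : ℤ) (x : ↥(Set.Ioi (0 : ℝ))) : ↥(Set.Ioi (0 : ℝ)) :=
  ⟨(x : ℝ) ^ n, by have := x.2; simp only [Set.mem_Ioi] at this ⊢; positivity⟩

lemma key : ∀ δ : ℝ, 0 < δ → ∃ x y : ℝ, 0 < x ∧ 0 < y ∧ x ≠ y ∧
    ∀ n : ℤ, 0 ≤ n → |x ^ n - y ^ n| < δ := by
  intro δ hδ
  have hm : 0 < min δ 1 := lt_min hδ one_pos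
  refine ⟨min δ 1 / 2, min δ 1 / 3, by positivity, by positivity, by
    intro h; nlinarith [h], ?_⟩
  intro n hn
  lift n to ℕ using hn
  rcases Nat.eq_zero_or_pos n with h0 | h1
  · subst h0; simpa using hδ
  · have hx1 : min δ 1 / 2 ≤ 1 := by
      have := min_le_right δ 1; linarith
    have hy1 : min δ 1 / 3 ≤ 1 := by
      have := min_le_right δ 1; linarith
    have hxd : min δ 1 / 2 < δ := by
      have := min_le_left δ 1; linarith
    have hyd : min δ 1 / 3 < δ := by
      have := min_le_left δ 1; linarith
    have hxp : (0:ℝ) < (min δ 1 / 2) ^ n := by positivity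
    have hyp : (0:ℝ) < (min δ 1 / 3) ^ n := by positivity
    have hxn : (min δ 1 / 2) ^ n ≤ min δ 1 / 2 :=
      pow_le_of_le_one (by positivity) hx1 h1.ne'
    have hyn : (min δ 1 / 3) ^ n ≤ min δ 1 / 3 :=
      pow_le_of_le_one (by positivity) hy1 h1.ne'
    rw [zpow_natCast, zpow_natCast, abs_sub_lt_iff]
    constructor <;> nlinarith

theorem stmt13 :
    ((∀ δ : ℝ, 0 < δ → ∃ x y : ℝ, 0 < x ∧ 0 < y ∧ x ≠ y ∧
        ∀ n : ℤ, 0 ≤ n → |x ^ n - y ^ n| < δ) ∧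
      (∀ μ ∈ 𝓤 ↥(Set.Ioi (0 : ℝ)), ∃ x y : ↥(Set.Ioi (0 : ℝ)), x ≠ y ∧
        ∀ n : ℤ, 0 ≤ n → (actZ n x, actZ n y) ∈ μ)) ∧
      ¬ ∃ ψ ∈ 𝓤 ↥(Set.Ioi (0 : ℝ)), ∀ x y : ↥(Set.Ioi (0 : ℝ)), x ≠ y →
          {n : ℤ | (actZ n x, actZ n y) ∉ ψ} ∉ {E : Set ℤ | E ⊆ {n : ℤ | n ≤ -1}} := by
  have main : ∀ μ ∈ 𝓤 ↥(Set.Ioi (0 : ℝ)), ∃ x y : ↥(Set.Ioi (0 : ℝ)), x ≠ y ∧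
      ∀ n : ℤ, 0 ≤ n → (actZ n x, actZ n y) ∈ μ := by
    intro μ hμ
    obtain ⟨ε, hε, hball⟩ := Metric.mem_uniformity_dist.mp hμ
    obtain ⟨x, y, hx, hy, hxy, h⟩ := key ε hε
    refine ⟨⟨x, hx⟩, ⟨y, hy⟩, by simpa [Subtype.ext_iff] using hxy, ?_⟩
    intro n hn
    apply hball
    simp only [actZ, Subtype.dist_eq, Real.dist_eq]
    exact h n hn
  refine ⟨⟨key, main⟩, ?_⟩
  rintro ⟨ψ, hψ, h⟩
  obtain ⟨x, y, hxy, hall⟩ := main ψ hψ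
  refine h x y hxy ?_
  intro n hn
  simp only [Set.mem_setOf_eq] at hn ⊢
  by_contra hc
  push_neg at hc
  exact hn (hall n (by omega))
end

section
/- Let (T,(X,𝒦)) be a transformation semigroup, 𝓘 an ideal on T, and A a nonempty subset of T. Suppose (T,(X,𝒦)) is 𝓘-expansive with 𝓘-expansive index ψ ∈ 𝒦 and has the shadowing property with respect to A. Then there exist entourages θ, λ ∈ 𝒦 such that for all x, z, y ∈ X, ((x,y) ∈ λ and (z,y) ∈ λ) implies (x,z) ∈ ψ, and every θ-pseudo orbit with respect to A has exactly one λ-trace. -/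
open scoped Uniformity

/-- `I` is an ideal on `T`. -/
def IsIdeal {T : Type*} (I : Set (Set T)) : Prop :=
  I.Nonempty ∧ (∀ A ∈ I, ∀ B ∈ I, A ∪ B ∈ I) ∧ (∀ A ∈ I, ∀ B, B ⊆ A → B ∈ I)

theorem stmt15 {T X : Type*} [Monoid T] [MulAction T X] [UniformSpace X]
    [ContinuousConstSMul T X] (I : Set (Set T)) (hI : IsIdeal I)
    (A : Set T) (hA : A.Nonempty)
    (ψ : Set (X × X)) (hψ : ψ ∈ 𝓤 X)
    (hexp : ∀ x y : X, x ≠ y → {t : T | (t • x, t • y) ∉ ψ} ∉ I)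
    (hsh : ShadowingWrt T X A) :
    ∃ θ ∈ 𝓤 X, ∃ lam ∈ 𝓤 X,
      (∀ x z y : X, (x, y) ∈ lam → (z, y) ∈ lam → (x, z) ∈ ψ) ∧
      ∀ x : T → X, IsPseudoOrbit θ A x → ∃! p : X, IsTrace lam x p := by
  obtain ⟨lam, hlam, hlsymm, hlcomp⟩ := comp_symm_mem_uniformity_sets hψ
  obtain ⟨θ, hθ, hθsh⟩ := hsh lam hlam
  refine ⟨θ, hθ, lam, hlam, ?_, ?_⟩
  · intro x z y hxy hzy
    exact hlcomp (SetRel.prodMk_mem_comp hxy (SetRel.symm lam hzy))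
  · intro x hx
    obtain ⟨p, hp⟩ := hθsh x hx
    refine ⟨p, hp, ?_⟩
    intro q hq
    by_contra hne
    apply hexp q p hne
    have : {t : T | (t • q, t • p) ∉ ψ} = ∅ := by
      ext t
      simp only [Set.mem_setOf_eq, Set.mem_empty_iff_false, iff_false, not_not]
      exact hlcomp (SetRel.prodMk_mem_comp (hq t) (SetRel.symm lam (hp t)))
    rw [this]
    obtain ⟨S, hS⟩ := hI.1
    exact hI.2.2 S hS ∅ (Set.empty_subset S)
end

section
/- Let (T,(X,𝒦)) be a transformation semigroup with X compact and containing at least two points, and let 𝓘 be an ideal on T. Suppose (T,(X,𝒦)) is 𝓘-expansive with an 𝓘-expansive index ψ ∈ 𝒦 that is closed as a subset of X × X, and let β ∈ 𝒦 be open in X × X. Then for every E ∈ 𝓘 there exists a nonempty finite subset F of T ∖ E such that for all x, y ∈ X: if (t·x, t·y) ∈ ψ for all t ∈ F, then (x, y) ∈ β. -/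
open scoped Uniformity

theorem stmt16 {T X : Type*} [Monoid T] [MulAction T X] [UniformSpace X]
    [ContinuousConstSMul T X] [CompactSpace X] [Nontrivial X]
    (I : Set (Set T)) (hI : IsIdeal I)
    (ψ : Set (X × X)) (hψ : ψ ∈ 𝓤 X) (hψclosed : IsClosed ψ)
    (hexp : ∀ x y : X, x ≠ y → {t : T | (t • x, t • y) ∉ ψ} ∉ I)
    (β : Set (X × X)) (hβ : β ∈ 𝓤 X) (hβopen : IsOpen β) :
    ∀ E ∈ I, ∃ F : Finset T, F.Nonempty ∧ (∀ t ∈ F, t ∉ E) ∧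
      ∀ x y : X, (∀ t ∈ F, (t • x, t • y) ∈ ψ) → (x, y) ∈ β := by
  intro E hE
  -- For each pair x ≠ y, there is t ∉ E with (t•x, t•y) ∉ ψ
  have key : ∀ x y : X, x ≠ y → ∃ t : T, t ∉ E ∧ (t • x, t • y) ∉ ψ := by
    intro x y hxy
    by_contra h
    push_neg at h
    exact hexp x y hxy (hI.2.2 E hE _ (fun t ht => by
      by_contra htE; exact ht (h t htE)))
  -- the sets U t are open and cover the compact complement of β
  set U : {t : T // t ∉ E} → Set (X × X) :=
    fun t => {p : X × X | (t.1 • p.1, t.1 • p.2) ∉ ψ} with hU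
  have hUopen : ∀ t, IsOpen (U t) := by
    intro t
    have hc : Continuous (fun p : X × X => (t.1 • p.1, t.1 • p.2)) :=
      ((continuous_const_smul t.1).comp continuous_fst).prodMk
        ((continuous_const_smul t.1).comp continuous_snd)
    exact hψclosed.isOpen_compl.preimage hc
  have hKcomp : IsCompact βᶜ := hβopen.isClosed_compl.isCompact
  have hcover : βᶜ ⊆ ⋃ t, U t := by
    rintro ⟨x, y⟩ hp
    have hxy : x ≠ y := by
      rintro rfl
      exact hp (refl_mem_uniformity hβ)
    obtain ⟨t, htE, htψ⟩ := key x y hxy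
    exact Set.mem_iUnion.2 ⟨⟨t, htE⟩, htψ⟩
  obtain ⟨s, hs⟩ := hKcomp.elim_finite_subcover U hUopen hcover
  -- a default element t₀ ∉ E, to guarantee nonemptiness
  obtain ⟨a, b, hab⟩ := exists_pair_ne X
  obtain ⟨t₀, ht₀E, _⟩ := key a b hab
  classical
  refine ⟨insert t₀ (s.image Subtype.val), ⟨t₀, Finset.mem_insert_self _ _⟩, ?_, ?_⟩
  · intro t ht
    rcases Finset.mem_insert.1 ht with rfl | ht
    · exact ht₀E
    · obtain ⟨⟨u, hu⟩, _, rfl⟩ := Finset.mem_image.1 ht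
      exact hu
  · intro x y hxy
    by_contra hβxy
    obtain ⟨i, his, hi⟩ := Set.mem_iUnion₂.1 (hs hβxy)
    exact hi (hxy i.1 (Finset.mem_insert_of_mem (Finset.mem_image.2 ⟨i, his, rfl⟩)))
end

section
/- Let X be a set with the discrete uniformity (the diagonal Δ_X = {(x,x) : x ∈ X} is an entourage), T a monoid with identity e, and 𝓘 an ideal on T. Then an action 𝔛 of T on X is 𝓘-topologically stable if and only if there exists B ∈ 𝓘 such that the only action 𝔷 of T on X satisfying 𝔷^t = 𝔛^t for all t ∈ B is 𝔛 itself (i.e., 𝔛 is an isolated point of the set of actions of T on X in the topology induced by the uniformity 𝔘_𝓘). -/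
open scoped Uniformity

/-- An action of a monoid `T` on a uniform space `X` by continuous maps. -/
structure MAction (T X : Type*) [Monoid T] [UniformSpace X] where
  act : T → X → X
  continuous_act : ∀ t : T, Continuous (act t)
  act_one : ∀ x : X, act 1 x = x
  act_mul : ∀ s t : T, ∀ x : X, act (s * t) x = act s (act t x)

/-- The action `𝔛` is `I`-topologically stable. -/
def ITopStable {T X : Type*} [Monoid T] [UniformSpace X]
    (I : Set (Set T)) (𝔛 : MAction T X) : Prop :=
  ∀ θ ∈ 𝓤 X, ∃ lam ∈ 𝓤 X, ∃ B ∈ I,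
    ∀ Z : MAction T X, (∀ t ∈ B, ∀ x : X, (𝔛.act t x, Z.act t x) ∈ lam) →
      ∃ f : X → X, Continuous f ∧ (∀ (t : T) (x : X), 𝔛.act t (f x) = f (Z.act t x)) ∧
        ∀ x : X, (f x, x) ∈ θ

theorem stmt18 {T X : Type*} [Monoid T] [UniformSpace X]
    (hdisc : Set.diagonal X ∈ 𝓤 X) (I : Set (Set T)) (hI : IsIdeal I) (𝔛 : MAction T X) :
    ITopStable I 𝔛 ↔
      ∃ B ∈ I, ∀ Z : MAction T X, (∀ t ∈ B, Z.act t = 𝔛.act t) → Z.act = 𝔛.act := by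
  constructor
  · intro h
    obtain ⟨lam, hlam, B, hB, hmain⟩ := h (Set.diagonal X) hdisc
    refine ⟨B, hB, fun Z hZ => ?_⟩
    obtain ⟨f, _, hcom, hid⟩ := hmain Z (fun t ht x => by
      rw [hZ t ht]; exact refl_mem_uniformity hlam)
    have hf : ∀ x, f x = x := fun x => hid x
    funext t x
    have := hcom t x
    rw [hf, hf] at this
    exact this.symm
  · rintro ⟨B, hB, hmain⟩ θ hθ
    refine ⟨Set.diagonal X, hdisc, B, hB, fun Z hZ => ?_⟩
    have hZX : Z.act = 𝔛.act := hmain Z (fun t ht => funext fun x => ((hZ t ht x) : _ = _).symm)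
    exact ⟨id, continuous_id, fun t x => by rw [hZX]; rfl, fun x => refl_mem_uniformity hθ⟩
end

section
/- Let (X,𝒦) be a compact Hausdorff uniform space, T a monoid with identity e, 𝓘 an ideal on T, and 𝔛 an action of T on X. Suppose the transformation semigroup (T, X, 𝔛) is 𝓘-expansive (there exists an 𝓘-expansive index ψ ∈ 𝒦) and has the 𝓘-shadowing property (there exists a nonempty A ∈ 𝓘 such that it has the shadowing property with respect to A). Then 𝔛 is 𝓘-topologically stable. -/
open scoped Uniformity

theorem stmt19 {T X : Type*} [Monoid T] [UniformSpace X] [CompactSpace X] [T2Space X]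
    (I : Set (Set T)) (hI : IsIdeal I) (𝔛 : MAction T X)
    (hexp : ∃ ψ ∈ 𝓤 X, ∀ x y : X, x ≠ y →
      {t : T | (𝔛.act t x, 𝔛.act t y) ∉ ψ} ∉ I)
    (hsh : ∃ A ∈ I, A.Nonempty ∧ ∀ α ∈ 𝓤 X, ∃ β ∈ 𝓤 X, ∀ x : T → X,
      (∀ a ∈ A, ∀ t : T, (𝔛.act a (x t), x (a * t)) ∈ β) →
      ∃ p : X, ∀ t : T, (𝔛.act t p, x t) ∈ α) :
    ITopStable I 𝔛 := by
  obtain ⟨ψ, hψU, hψ⟩ := hexp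
  obtain ⟨A, hAI, hAne, hshad⟩ := hsh
  have hempty : (∅ : Set T) ∈ I := hI.2.2 A hAI ∅ (Set.empty_subset A)
  intro θ hθ
  have hθ₁ : θ ∩ ψ ∈ 𝓤 X := Filter.inter_mem hθ hψU
  obtain ⟨α₀, hα₀U, hα₀⟩ := comp_mem_uniformity_sets hθ₁
  obtain ⟨α₁, ⟨hα₁U, hα₁closed⟩, hα₁sub⟩ := (uniformity_hasBasis_closed).mem_iff.mp hα₀U
  set α : Set (X × X) := SetRel.symmetrize α₁ with hαdef
  have hαU : α ∈ 𝓤 X := symmetrize_mem_uniformity hα₁U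
  have hαclosed : IsClosed α :=
    hα₁closed.inter (hα₁closed.preimage continuous_swap)
  have hαsymm : SetRel.IsSymm α := SetRel.isSymm_symmetrize (R := α₁)
  have hαsub₀ : α ⊆ α₀ := (SetRel.symmetrize_subset_self (R := α₁)).trans hα₁sub
  have hcomp : SetRel.comp α α ⊆ θ ∩ ψ := (SetRel.comp_subset_comp hαsub₀ hαsub₀).trans hα₀
  have hαsubθ : α ⊆ θ ∩ ψ := fun p hp => by
    have : p ∈ SetRel.comp α α := ⟨p.2, hp, refl_mem_uniformity hαU⟩
    exact hcomp this
  obtain ⟨β, hβU, hβ⟩ := hshad α hαU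
  refine ⟨β, hβU, A, hAI, ?_⟩
  intro Z hZ
  -- uniqueness of α-traces
  have huniq : ∀ (g : T → X) (p q : X), (∀ t, (𝔛.act t p, g t) ∈ α) →
      (∀ t, (𝔛.act t q, g t) ∈ α) → p = q := by
    intro g p q hp hq
    by_contra hne
    refine hψ p q hne ?_
    have hE : {t : T | (𝔛.act t p, 𝔛.act t q) ∉ ψ} = ∅ := by
      ext t
      simp only [Set.mem_setOf_eq, Set.mem_empty_iff_false, iff_false, not_not]
      have hm : (𝔛.act t p, 𝔛.act t q) ∈ SetRel.comp α α :=
        ⟨g t, hp t, hαsymm.symm _ _ (hq t)⟩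
      exact (hcomp hm).2
    rw [hE]; exact hempty
  -- existence of traces
  have htr : ∀ x : X, ∃ p : X, ∀ t : T, (𝔛.act t p, Z.act t x) ∈ α := by
    intro x
    refine hβ (fun t => Z.act t x) ?_
    intro a ha t
    show (𝔛.act a (Z.act t x), Z.act (a * t) x) ∈ β
    rw [Z.act_mul]
    exact hZ a ha (Z.act t x)
  choose f hf using htr
  have hequiv : ∀ (t : T) (x : X), 𝔛.act t (f x) = f (Z.act t x) := by
    intro t x
    refine huniq (fun s => Z.act s (Z.act t x)) _ _ ?_ (fun s => hf (Z.act t x) s)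
    intro s
    show (𝔛.act s (𝔛.act t (f x)), Z.act s (Z.act t x)) ∈ α
    rw [← 𝔛.act_mul, ← Z.act_mul]
    exact hf x (s * t)
  -- graph of f is closed
  have hgraph : {p : X × X | p.2 = f p.1} =
      ⋂ t : T, (fun p : X × X => (𝔛.act t p.2, Z.act t p.1)) ⁻¹' α := by
    ext ⟨x, y⟩
    simp only [Set.mem_setOf_eq, Set.mem_iInter, Set.mem_preimage]
    constructor
    · rintro rfl; exact fun t => hf x t
    · intro h; exact huniq (fun t => Z.act t x) y (f x) h (hf x)
  have hGclosed : IsClosed {p : X × X | p.2 = f p.1} := by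
    rw [hgraph]
    exact isClosed_iInter fun t =>
      hαclosed.preimage (((𝔛.continuous_act t).comp continuous_snd).prodMk
        ((Z.continuous_act t).comp continuous_fst))
  have hcont : Continuous f := by
    rw [continuous_iff_isClosed]
    intro C hC
    have hkey : f ⁻¹' C = Prod.fst '' ({p : X × X | p.2 = f p.1} ∩ Set.univ ×ˢ C) := by
      ext x
      constructor
      · intro hx
        exact ⟨(x, f x), ⟨rfl, Set.mem_univ _, hx⟩, rfl⟩
      · rintro ⟨⟨a, b⟩, ⟨hb, -, hbC⟩, rfl⟩
        have hb' : b = f a := hb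
        show f a ∈ C
        exact hb' ▸ hbC
    rw [hkey]
    have hcpt : IsCompact ({p : X × X | p.2 = f p.1} ∩ Set.univ ×ˢ C) :=
      (hGclosed.inter (isClosed_univ.prod hC)).isCompact
    exact (hcpt.image continuous_fst).isClosed
  refine ⟨f, hcont, hequiv, fun x => ?_⟩
  have h1 := hf x 1
  rw [𝔛.act_one, Z.act_one] at h1
  exact (hαsubθ h1).1
end
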